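/- arXiv:math/0606480 — 2 statements merged into one kernel-verified Lean document; each statement's English description precedes it below -/
import Mathlib

section
/- For every t ∈ [0,1], every N ∈ (1/2)ℤ, and every real l ≥ max(|N|, 1/2), one has |β_N(l) − β_0(l)| ≤ |ε·[2|N|]·(q^{−1} + q − q^{ε}·t) + t·(q − q^{−1})·[|N|]·[|N|+1]| · q^{2l}, where ε = sign(N). -/
noncomputable section

open scoped BigOperators

namespace Podles

/-- The `q`-number `[x] = (q^x - q^(-x))/(q - q⁻¹)`. -/
def qn (q x : ℝ) : ℝ := (q ^ x - q ^ (-x)) / (q - q⁻¹)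

def alphaN (q t N l : ℝ) : ℝ :=
  Real.sqrt (qn q 2 * qn q (l + N) * qn q (l - N) * qn q (2 * l)) /
      (Real.sqrt (qn q (2 * l + 1)) * qn q l) *
    Real.sqrt (1 - t + q ^ (-(2 * N)) * ((qn q (2 * l))⁻¹) ^ 2 * qn q l ^ 2 *
      (t - 1 + q ^ (2 * N)) ^ 2)

def betaN (q t N l : ℝ) : ℝ :=
  (Real.sign N * qn q (2 * |N|) * (q⁻¹ + q - q ^ Real.sign N * t) +
      t * (q - q⁻¹) * (qn q |N| * qn q (|N| + 1) - qn q l * qn q (l + 1))) /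
    (q * qn q (2 * l + 2))

/-- The coefficients `α^ν_i(l, m; N)`, with the convention that they vanish
whenever `l + ν < |N|` or `|m + i| > l + ν`. -/
def coef (q t : ℝ) (i ν : ℤ) (N l m : ℝ) : ℝ :=
  if l + (ν : ℝ) < |N| ∨ l + (ν : ℝ) < |m + (i : ℝ)| then 0
  else if i = 1 ∧ ν = 1 then
    q ^ (-l + m) * Real.sqrt (qn q (l + m + 1)) * Real.sqrt (qn q (l + m + 2)) *
      (Real.sqrt (qn q (2 * l + 1)))⁻¹ * (Real.sqrt (qn q (2 * l + 2)))⁻¹ * alphaN q t N (l + 1)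
  else if i = 1 ∧ ν = 0 then
    -(q ^ (m + 2)) * Real.sqrt (qn q (l - m)) * Real.sqrt (qn q (l + m + 1)) *
      Real.sqrt (qn q 2) * (qn q (2 * l))⁻¹ * betaN q t N l
  else if i = 1 ∧ ν = -1 then
    -(q ^ (l + m + 1)) * Real.sqrt (qn q (l - m - 1)) * Real.sqrt (qn q (l - m)) *
      (Real.sqrt (qn q (2 * l - 1)))⁻¹ * (Real.sqrt (qn q (2 * l)))⁻¹ * alphaN q t N l
  else if i = 0 ∧ ν = 1 then
    q ^ m * Real.sqrt (qn q (l - m + 1)) * Real.sqrt (qn q (l + m + 1)) * Real.sqrt (qn q 2) *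
      (Real.sqrt (qn q (2 * l + 1)))⁻¹ * (Real.sqrt (qn q (2 * l + 2)))⁻¹ * alphaN q t N (l + 1)
  else if i = 0 ∧ ν = 0 then
    (qn q (2 * l))⁻¹ *
      (qn q (l - m + 1) * qn q (l + m) - q ^ (2 : ℝ) * qn q (l - m) * qn q (l + m + 1)) *
      betaN q t N l
  else if i = 0 ∧ ν = -1 then
    q ^ m * Real.sqrt (qn q (l - m)) * Real.sqrt (qn q (l + m)) * Real.sqrt (qn q 2) *
      (Real.sqrt (qn q (2 * l - 1)))⁻¹ * (Real.sqrt (qn q (2 * l)))⁻¹ * alphaN q t N l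
  else if i = -1 ∧ ν = 1 then
    q ^ (l + m) * Real.sqrt (qn q (l - m + 1)) * Real.sqrt (qn q (l - m + 2)) *
      (Real.sqrt (qn q (2 * l + 1)))⁻¹ * (Real.sqrt (qn q (2 * l + 2)))⁻¹ * alphaN q t N (l + 1)
  else if i = -1 ∧ ν = 0 then
    q ^ m * Real.sqrt (qn q (l - m + 1)) * Real.sqrt (qn q (l + m)) * Real.sqrt (qn q 2) *
      (qn q (2 * l))⁻¹ * betaN q t N l
  else if i = -1 ∧ ν = -1 then
    -(q ^ (-l + m - 1)) * Real.sqrt (qn q (l + m - 1)) * Real.sqrt (qn q (l + m)) *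
      (Real.sqrt (qn q (2 * l - 1)))⁻¹ * (Real.sqrt (qn q (2 * l)))⁻¹ * alphaN q t N l
  else 0



lemma qn_pos (q : ℝ) (hq0 : 0 < q) (hq1 : q < 1) {x : ℝ} (hx : 0 < x) : 0 < qn q x := by
  have h1 : q ^ x < q ^ (-x) := Real.rpow_lt_rpow_of_exponent_gt hq0 hq1 (by linarith)
  have h2 : 1 < q⁻¹ := by
    rw [lt_inv_comm₀ one_pos hq0]; simpa using hq1
  exact div_pos_of_neg_of_neg (by linarith) (by linarith)

lemma key (q : ℝ) (hq0 : 0 < q) (hq1 : q < 1) (l : ℝ) (hl : (1:ℝ)/2 ≤ l) :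
    1 ≤ q ^ (2*l) * (q * qn q (2*l+2)) := by
  have h2 : 1 < q⁻¹ := by
    rw [lt_inv_comm₀ one_pos hq0]; simpa using hq1
  have hne : 0 < q⁻¹ - q := by linarith
  have hqn : qn q (2*l+2) = (q ^ (-(2*l+2)) - q ^ (2*l+2)) / (q⁻¹ - q) := by
    rw [qn, ← neg_div_neg_eq, neg_sub, neg_sub]
  have c1 : q ^ (2*l) * q * q ^ (-(2*l+2)) = q⁻¹ := by
    calc q ^ (2*l) * q * q ^ (-(2*l+2))
        = q ^ (2*l) * q ^ (1:ℝ) * q ^ (-(2*l+2)) := by rw [Real.rpow_one]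
      _ = q ^ (2*l + 1 + -(2*l+2)) := by rw [← Real.rpow_add hq0, ← Real.rpow_add hq0]
      _ = q ^ (-1:ℝ) := by congr 1; ring
      _ = q⁻¹ := Real.rpow_neg_one q
  have c2 : q ^ (2*l) * q * q ^ (2*l+2) = q ^ (4*l+3) := by
    calc q ^ (2*l) * q * q ^ (2*l+2)
        = q ^ (2*l) * q ^ (1:ℝ) * q ^ (2*l+2) := by rw [Real.rpow_one]
      _ = q ^ (2*l + 1 + (2*l+2)) := by rw [← Real.rpow_add hq0, ← Real.rpow_add hq0]
      _ = q ^ (4*l+3) := by congr 1; ring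
  have e : q ^ (2*l) * (q * ((q ^ (-(2*l+2)) - q ^ (2*l+2)) / (q⁻¹ - q)))
      = (q ^ (2*l) * q * q ^ (-(2*l+2)) - q ^ (2*l) * q * q ^ (2*l+2)) / (q⁻¹ - q) := by
    ring
  rw [hqn, e, c1, c2, le_div_iff₀ hne, one_mul]
  have h3 : q ^ (4*l+3) ≤ q := by
    have := Real.rpow_le_rpow_of_exponent_ge hq0 hq1.le (by linarith : (1:ℝ) ≤ 4*l+3)
    simpa [Real.rpow_one] using this
  linarith

/-- `|β_N(l) − β_0(l)| ≤ |ε[2|N|](q⁻¹+q−q^ε t) + t(q−q⁻¹)[|N|][|N|+1]| q^{2l}`. -/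
theorem statement2 (q : ℝ) (hq0 : 0 < q) (hq1 : q < 1) :
    ∀ t : ℝ, 0 ≤ t → t ≤ 1 → ∀ N : ℝ, (∃ n : ℤ, N = (n : ℝ) / 2) →
      ∀ l : ℝ, max |N| (1 / 2) ≤ l →
        |betaN q t N l - betaN q t 0 l| ≤
          |Real.sign N * qn q (2 * |N|) * (q⁻¹ + q - q ^ Real.sign N * t) +
              t * (q - q⁻¹) * (qn q |N| * qn q (|N| + 1))| * q ^ (2 * l) := by
  intro t ht0 ht1 N hN l hl
  have hl2 : (1:ℝ)/2 ≤ l := le_trans (le_max_right _ _) hl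
  set A := Real.sign N * qn q (2 * |N|) * (q⁻¹ + q - q ^ Real.sign N * t) +
      t * (q - q⁻¹) * (qn q |N| * qn q (|N| + 1)) with hA
  have hD : 0 < q * qn q (2*l+2) :=
    mul_pos hq0 (qn_pos q hq0 hq1 (by linarith))
  have hq00 : qn q 0 = 0 := by simp [qn]
  have h0 : betaN q t 0 l =
      (t * (q - q⁻¹) * (0 - qn q l * qn q (l + 1))) / (q * qn q (2 * l + 2)) := by
    rw [betaN]
    norm_num [hq00, Real.sign_zero]
  have hdiff : betaN q t N l - betaN q t 0 l = A / (q * qn q (2*l+2)) := by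
    rw [betaN, h0, div_sub_div_same]
    congr 1
    ring
  rw [hdiff, abs_div, abs_of_pos hD, div_le_iff₀ hD]
  calc |A| = |A| * 1 := (mul_one _).symm
    _ ≤ |A| * (q ^ (2*l) * (q * qn q (2*l+2))) :=
        mul_le_mul_of_nonneg_left (key q hq0 hq1 l hl2) (abs_nonneg _)
    _ = |A| * q ^ (2*l) * (q * qn q (2*l+2)) := by ring


end Podles
end
end

section
/- Fix q ∈ (0,1) and t ∈ [0,1]. For z ∈ ℂ with Re z > 1, the series ψ(z) := 2·Σ_{n=1}^∞ n^{−z} · Σ_{k=0}^{2n−1} ( t²·q^{4k} + (1−t)·((1+q^{−2})·q^{2k} − (q²+q^{−2})·q^{4k}) ) converges absolutely, and there exists an entire function g : ℂ → ℂ such that ψ(z) = 2·(1+(1−t)²)·(1−q⁴)^{−1}·ζ(z) + g(z) for all z with Re z > 1, where ζ is the Riemann zeta function. In particular, ψ extends to a meromorphic function on ℂ whose only singularity is a simple pole at z = 1 with residue 2·(1+(1−t)²)/(1−q⁴), which is nonzero for every t ∈ [0,1]. -/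
/-!
Summing the two geometric series in `k`, the inner sum for `n` is `c + A q^{4n} + B q^{8n}` with
`c = (1 + (1 - t)²) / (1 - q⁴)`. Hence `ψ = 2 (c ζ + A L(q⁴) + B L(q⁸))`, where
`L(r)(z) = Σ rⁿ n^{-z}` is entire for `|r| < 1` because geometric decay beats every power of `n`;
the pole and its residue come from `ζ` alone.
-/

open Complex Filter Topology LSeries

lemma LSeries.term_add_one_eq (f : ℕ → ℂ) (s : ℂ) (n : ℕ) :
    term f s (n + 1) = ((n : ℂ) + 1) ^ (-s) * f (n + 1) := by
  rw [term_of_ne_zero n.succ_ne_zero, cpow_neg, div_eq_inv_mul]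
  push_cast
  rfl

lemma LSeries_eq_tsum_add_one (f : ℕ → ℂ) (s : ℂ) :
    LSeries f s = ∑' n : ℕ, ((n : ℂ) + 1) ^ (-s) * f (n + 1) := by
  rw [LSeries, ← tsum_pnat_eq_tsum_of_eq_zero (term_zero f s), tsum_pnat_eq_tsum_succ]
  simp_rw [term_add_one_eq]

lemma LSeriesSummable.summable_norm_add_one {f : ℕ → ℂ} {s : ℂ} (hf : LSeriesSummable f s) :
    Summable fun n : ℕ => ‖((n : ℂ) + 1) ^ (-s) * f (n + 1)‖ := by
  simp_rw [← term_add_one_eq]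
  exact summable_norm_iff.2 ((summable_nat_add_iff 1).2 hf)

lemma LSeriesSummable_geometric {r : ℂ} (hr : ‖r‖ < 1) (s : ℂ) : LSeriesSummable (r ^ ·) s := by
  obtain ⟨N, hN⟩ := exists_nat_ge (-s.re)
  refine LSeriesSummable.of_re_le_re (s := -N) (by simpa [neg_le] using hN) ?_
  refine .of_norm_bounded (summable_pow_mul_geometric_of_norm_lt_one (R := ℝ) N
    (r := ‖r‖) (by simpa using hr)) fun n => ?_
  rcases eq_or_ne n 0 with rfl | hn
  · simp
  · simp [term_of_ne_zero hn, cpow_neg, mul_comm]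

lemma differentiable_LSeries_geometric {r : ℂ} (hr : ‖r‖ < 1) :
    Differentiable ℂ (LSeries (r ^ ·)) := fun s =>
  (LSeries_hasDerivAt <| (LSeriesSummable_geometric hr (s - 1)).abscissaOfAbsConv_le.trans_lt <|
    by exact_mod_cast sub_one_lt s.re).differentiableAt

lemma tendsto_sub_one_mul_const_mul_riemannZeta_add {g : ℂ → ℂ} (hg : ContinuousAt g 1)
    (K : ℂ) : Tendsto (fun z => (z - 1) * (K * riemannZeta z + g z)) (𝓝[≠] 1) (𝓝 K) := by
  have hvanish : Tendsto (fun z : ℂ => (z - 1) * g z) (𝓝[≠] 1) (𝓝 0) := by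
    have hcont : ContinuousAt (fun z : ℂ => (z - 1) * g z) 1 :=
      (continuousAt_id.sub continuousAt_const).mul hg
    simpa using hcont.tendsto.mono_left nhdsWithin_le_nhds
  simpa [mul_add, mul_left_comm] using (riemannZeta_residue_one.const_mul K).add hvanish

section ConstAddGeometric

variable {c A B r r' s : ℂ}

lemma const_add_geometric_eq_smul :
    (fun n : ℕ => c + A * r ^ n + B * r' ^ n) = c • 1 + A • (r ^ ·) + B • (r' ^ ·) := by
  ext n
  simp

lemma LSeriesSummable_const_add_geometric (hr : ‖r‖ < 1) (hr' : ‖r'‖ < 1) (hs : 1 < s.re) :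
    LSeriesSummable (fun n => c + A * r ^ n + B * r' ^ n) s :=
  const_add_geometric_eq_smul ▸
    (((LSeriesSummable_one_iff.2 hs).smul c).add ((LSeriesSummable_geometric hr s).smul A)).add
      ((LSeriesSummable_geometric hr' s).smul B)

lemma LSeries_const_add_geometric (hr : ‖r‖ < 1) (hr' : ‖r'‖ < 1) (hs : 1 < s.re) :
    LSeries (fun n => c + A * r ^ n + B * r' ^ n) s =
      c * riemannZeta s + (A * LSeries (r ^ ·) s + B * LSeries (r' ^ ·) s) := by
  have h₁ := (LSeriesSummable_one_iff.2 hs).smul c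
  have h₂ := (LSeriesSummable_geometric hr s).smul A
  have h₃ := (LSeriesSummable_geometric hr' s).smul B
  rw [const_add_geometric_eq_smul, LSeries_add (h₁.add h₂) h₃, LSeries_add h₁ h₂, LSeries_smul, LSeries_smul, LSeries_smul, LSeries_one_eq_riemannZeta hs, add_assoc]

end ConstAddGeometric

namespace Podles

lemma sum_range_two_mul_eq_const_add_geometric (q t : ℝ) (hq : q ≠ 0) (hq4 : q ^ 4 ≠ 1)
    (m : ℕ) :
    ∑ k ∈ Finset.range (2 * m), (t ^ 2 * q ^ (4 * k) + (1 - t) * ((1 + (q ^ 2)⁻¹) * q ^ (2 * k) -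
        (q ^ 2 + (q ^ 2)⁻¹) * q ^ (4 * k))) =
      (1 + (1 - t) ^ 2) / (1 - q ^ 4) + -(1 - t) * (1 + (q ^ 2)⁻¹) / (1 - q ^ 2) * (q ^ 4) ^ m +
        ((1 - t) * (q ^ 2 + (q ^ 2)⁻¹) - t ^ 2) / (1 - q ^ 4) * (q ^ 8) ^ m := by
  have hq2 : q ^ 2 ≠ 1 := fun h => hq4 (by rw [show q ^ 4 = (q ^ 2) ^ 2 by ring, h, one_pow])
  have hgeom : ∀ k : ℕ, t ^ 2 * q ^ (4 * k) + (1 - t) * ((1 + (q ^ 2)⁻¹) * q ^ (2 * k) -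
      (q ^ 2 + (q ^ 2)⁻¹) * q ^ (4 * k)) =
        (1 - t) * (1 + (q ^ 2)⁻¹) * (q ^ 2) ^ k +
          (t ^ 2 - (1 - t) * (q ^ 2 + (q ^ 2)⁻¹)) * (q ^ 4) ^ k :=
    fun k => by rw [pow_mul, pow_mul]; ring
  have h2 : (q ^ 2) ^ (2 * m) = (q ^ 4) ^ m := by rw [← pow_mul, ← pow_mul]; ring_nf
  have h4 : (q ^ 4) ^ (2 * m) = (q ^ 8) ^ m := by rw [← pow_mul, ← pow_mul]; ring_nf
  simp only [hgeom, Finset.sum_add_distrib, ← Finset.mul_sum, geom_sum_eq hq2, geom_sum_eq hq4,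
    h2, h4]
  have : 1 - q ^ 4 ≠ 0 := sub_ne_zero.2 hq4.symm
  field_simp
  ring

theorem statement19_general (q t : ℝ) (hq0 : 0 < q) (hq1 : q < 1) :
    (∀ z : ℂ, 1 < z.re →
      Summable (fun n : ℕ =>
        ‖(2 : ℂ) * ((n : ℂ) + 1) ^ (-z) *
            ((∑ k ∈ Finset.range (2 * (n + 1)),
                (t ^ 2 * q ^ (4 * k) +
                  (1 - t) * ((1 + (q ^ 2)⁻¹) * q ^ (2 * k) -
                    (q ^ 2 + (q ^ 2)⁻¹) * q ^ (4 * k))) : ℝ) : ℂ)‖)) ∧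
    ∃ g : ℂ → ℂ, Differentiable ℂ g ∧
      (∀ z : ℂ, 1 < z.re →
        (2 : ℂ) * ∑' n : ℕ, ((n : ℂ) + 1) ^ (-z) *
            ((∑ k ∈ Finset.range (2 * (n + 1)),
                (t ^ 2 * q ^ (4 * k) +
                  (1 - t) * ((1 + (q ^ 2)⁻¹) * q ^ (2 * k) -
                    (q ^ 2 + (q ^ 2)⁻¹) * q ^ (4 * k))) : ℝ) : ℂ) =
          ((2 * (1 + (1 - t) ^ 2) / (1 - q ^ 4) : ℝ) : ℂ) * riemannZeta z + g z) ∧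
      (∀ z : ℂ, z ≠ 1 → DifferentiableAt ℂ
        (fun w => ((2 * (1 + (1 - t) ^ 2) / (1 - q ^ 4) : ℝ) : ℂ) * riemannZeta w + g w) z) ∧
      Filter.Tendsto
        (fun z : ℂ => (z - 1) *
          (((2 * (1 + (1 - t) ^ 2) / (1 - q ^ 4) : ℝ) : ℂ) * riemannZeta z + g z))
        (nhdsWithin 1 {(1 : ℂ)}ᶜ)
        (nhds ((2 * (1 + (1 - t) ^ 2) / (1 - q ^ 4) : ℝ) : ℂ)) ∧
      (2 * (1 + (1 - t) ^ 2) / (1 - q ^ 4) : ℝ) ≠ 0 := by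
  have hq4 : q ^ 4 < 1 := pow_lt_one₀ hq0.le hq1 (by norm_num)
  have hq8 : q ^ 8 < 1 := pow_lt_one₀ hq0.le hq1 (by norm_num)
  have hr4 : ‖((q ^ 4 : ℝ) : ℂ)‖ < 1 := by rwa [norm_real, Real.norm_of_nonneg (by positivity)]
  have hr8 : ‖((q ^ 8 : ℝ) : ℂ)‖ < 1 := by rwa [norm_real, Real.norm_of_nonneg (by positivity)]
  obtain ⟨c, A, B, hc, hcoef⟩ : ∃ c A B : ℂ, c = ((1 + (1 - t) ^ 2) / (1 - q ^ 4) : ℝ) ∧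
      ∀ m : ℕ, ((∑ k ∈ Finset.range (2 * m), (t ^ 2 * q ^ (4 * k) + (1 - t) *
        ((1 + (q ^ 2)⁻¹) * q ^ (2 * k) - (q ^ 2 + (q ^ 2)⁻¹) * q ^ (4 * k))) : ℝ) : ℂ) =
        c + A * ((q ^ 4 : ℝ) : ℂ) ^ m + B * ((q ^ 8 : ℝ) : ℂ) ^ m :=
    ⟨_, _, _, rfl, fun m => by
      rw [sum_range_two_mul_eq_const_add_geometric q t hq0.ne' hq4.ne]; push_cast; rfl⟩
  have hK : (((2 * (1 + (1 - t) ^ 2) / (1 - q ^ 4) : ℝ)) : ℂ) = 2 * c := by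
    rw [hc]; push_cast; ring
  simp_rw [hcoef, hK]
  set g : ℂ → ℂ := fun z =>
    2 * (A * LSeries (((q ^ 4 : ℝ) : ℂ) ^ ·) z + B * LSeries (((q ^ 8 : ℝ) : ℂ) ^ ·) z)
  have hg : Differentiable ℂ g :=
    (((differentiable_LSeries_geometric hr4).const_mul A).add
      ((differentiable_LSeries_geometric hr8).const_mul B)).const_mul 2
  refine ⟨fun z hz => ?_, g, hg, fun z hz => ?_, fun z hz => ?_,
    tendsto_sub_one_mul_const_mul_riemannZeta_add hg.continuous.continuousAt _,
    div_ne_zero (by positivity) (sub_pos.2 hq4).ne'⟩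
  · have hsum := (LSeriesSummable_const_add_geometric (c := c) (A := A) (B := B)
      hr4 hr8 hz).summable_norm_add_one
    refine (hsum.mul_left 2).congr fun n => ?_
    rw [mul_assoc, norm_mul (2 : ℂ), Complex.norm_two]
  · rw [← LSeries_eq_tsum_add_one (fun n => c + A * _ ^ n + B * _ ^ n),
      LSeries_const_add_geometric hr4 hr8 hz]
    ring
  · exact ((differentiableAt_riemannZeta hz).const_mul _).add (hg z)

/-- the zeta-type function `ψ(z) = 2 Σ_{n≥1} n^{−z} Σ_{k=0}^{2n−1} (t²q^{4k} +
(1−t)((1+q^{−2})q^{2k} − (q²+q^{−2})q^{4k}))` converges absolutely for `Re z > 1`, equals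
`2(1+(1−t)²)(1−q⁴)⁻¹ ζ(z)` plus an entire function there, and hence extends meromorphically
to `ℂ` with a single simple pole at `z = 1` with nonzero residue `2(1+(1−t)²)/(1−q⁴)`. -/
theorem statement19 (q t : ℝ) (hq0 : 0 < q) (hq1 : q < 1) (ht0 : 0 ≤ t) (ht1 : t ≤ 1) :
    (∀ z : ℂ, 1 < z.re →
      Summable (fun n : ℕ =>
        ‖(2 : ℂ) * ((n : ℂ) + 1) ^ (-z) *
            ((∑ k ∈ Finset.range (2 * (n + 1)),
                (t ^ 2 * q ^ (4 * k) +
                  (1 - t) * ((1 + (q ^ 2)⁻¹) * q ^ (2 * k) -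
                    (q ^ 2 + (q ^ 2)⁻¹) * q ^ (4 * k))) : ℝ) : ℂ)‖)) ∧
    ∃ g : ℂ → ℂ, Differentiable ℂ g ∧
      (∀ z : ℂ, 1 < z.re →
        (2 : ℂ) * ∑' n : ℕ, ((n : ℂ) + 1) ^ (-z) *
            ((∑ k ∈ Finset.range (2 * (n + 1)),
                (t ^ 2 * q ^ (4 * k) +
                  (1 - t) * ((1 + (q ^ 2)⁻¹) * q ^ (2 * k) -
                    (q ^ 2 + (q ^ 2)⁻¹) * q ^ (4 * k))) : ℝ) : ℂ) =
          ((2 * (1 + (1 - t) ^ 2) / (1 - q ^ 4) : ℝ) : ℂ) * riemannZeta z + g z) ∧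
      (∀ z : ℂ, z ≠ 1 → DifferentiableAt ℂ
        (fun w => ((2 * (1 + (1 - t) ^ 2) / (1 - q ^ 4) : ℝ) : ℂ) * riemannZeta w + g w) z) ∧
      Filter.Tendsto
        (fun z : ℂ => (z - 1) *
          (((2 * (1 + (1 - t) ^ 2) / (1 - q ^ 4) : ℝ) : ℂ) * riemannZeta z + g z))
        (nhdsWithin 1 {(1 : ℂ)}ᶜ)
        (nhds ((2 * (1 + (1 - t) ^ 2) / (1 - q ^ 4) : ℝ) : ℂ)) ∧
      (2 * (1 + (1 - t) ^ 2) / (1 - q ^ 4) : ℝ) ≠ 0 :=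
  statement19_general q t hq0 hq1

end Podles
end
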